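/- Let n ≥ 1 and let J : Fin n → Fin n → ℝ be arbitrary coupling constants. Define the Heisenberg X(-X) (double-quantum) Hamiltonian H := Σ over pairs k < l of (J k l : ℂ) • (X k * X l - Y k * Y l). Then the joint local z-rotation by angle π/2, K := exp(-(Complex.I * (π/2)) • F_z), satisfies K * H * Kᴴ = -H. In particular the X(-X) interaction is type-I invertible by local unitaries on any coupling topology, bipartite or not. -/

import Mathlib

open Matrix

/-- A `2^n`-dimensional matrix (indexed by configurations `Fin n → Fin 2`) is a
local unitary if it is the `n`-fold Kronecker product of unitary 2×2 matrices. -/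
def IsLocalUnitary {n : ℕ} (K : Matrix (Fin n → Fin 2) (Fin n → Fin 2) ℂ) : Prop :=
  ∃ u : Fin n → Matrix (Fin 2) (Fin 2) ℂ,
    (∀ ℓ, (u ℓ)ᴴ * u ℓ = 1) ∧ ∀ f g, K f g = ∏ ℓ, u ℓ (f ℓ) (g ℓ)

/-- The Pauli-z operator acting on qubit `ℓ`. -/
def Zop {n : ℕ} (ℓ : Fin n) : Matrix (Fin n → Fin 2) (Fin n → Fin 2) ℂ :=
  fun f g => if f = g then (-1 : ℂ) ^ ((f ℓ : ℕ)) else 0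

/-- The Pauli-x operator acting on qubit `ℓ`. -/
def Xop {n : ℕ} (ℓ : Fin n) : Matrix (Fin n → Fin 2) (Fin n → Fin 2) ℂ :=
  fun f g => if f ℓ ≠ g ℓ ∧ ∀ m, m ≠ ℓ → f m = g m then 1 else 0

/-- The Pauli-y operator acting on qubit `ℓ`. -/
def Yop {n : ℕ} (ℓ : Fin n) : Matrix (Fin n → Fin 2) (Fin n → Fin 2) ℂ :=
  fun f g => if f ℓ ≠ g ℓ ∧ ∀ m, m ≠ ℓ → f m = g m then
    Complex.I * (-1 : ℂ) ^ ((f ℓ : ℕ) + 1) else 0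

/-!
Write `F_z` as the diagonal matrix of the z-spin `m f = ½ Σ_ℓ (-1)^(f ℓ)`, so that
`K_θ = exp(-iθ F_z)` is diagonal and conjugation by it multiplies the `(f, g)` entry by
`exp(-iθ (m f - m g))`. The operators `X_k`, `Y_k` only connect configurations differing at
qubit `k` alone, where `m f - m g = (-1)^(f k)`; hence `K_θ` rotates `X_k ↦ cos θ X_k + sin θ Y_k`
and `Y_k ↦ cos θ Y_k - sin θ X_k`. At `θ = π/2` this is `X_k ↦ Y_k`, `Y_k ↦ -X_k`, and since
conjugation by a unitary is multiplicative, `X_k X_l - Y_k Y_l ↦ Y_k Y_l - X_k X_l`.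
-/

open Complex

lemma exp_smul_diagonal {ι : Type*} [Fintype ι] [DecidableEq ι] (c : ℂ) (v : ι → ℂ) :
    NormedSpace.exp (c • diagonal v) = diagonal fun i => cexp (c * v i) := by
  rw [← diagonal_smul, exp_diagonal]
  congr 1
  funext i
  rw [Pi.coe_exp, ← Complex.exp_eq_exp_ℂ]
  rfl

lemma star_exp_neg_I_mul_ofReal (θ x : ℝ) : star (cexp (-(I * θ) * x)) = cexp (I * θ * x) := by
  rw [Complex.star_def, ← Complex.exp_conj]
  simp

-- `I * (-1) ^ (s + 1)` is the entry of the Pauli-y matrix in row `s`.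
lemma exp_neg_I_mul_neg_one_pow (θ : ℝ) (s : Fin 2) :
    cexp (-(I * θ) * (-1) ^ (s : ℕ)) = Real.cos θ + Real.sin θ * (I * (-1) ^ ((s : ℕ) + 1)) := by
  fin_cases s
  · simp only [pow_zero, zero_add, pow_one, mul_one, mul_neg]
    rw [mul_comm, ← neg_mul, ← cos_sub_sin_I]
    push_cast; ring
  · simp only [pow_one, mul_neg_one, neg_neg, one_add_one_eq_two, even_two, Even.neg_pow,
      one_pow, mul_one]
    rw [mul_comm, ← cos_add_sin_I]
    push_cast; ring

section ZRotation

variable {n : ℕ}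

noncomputable def zSpin (f : Fin n → Fin 2) : ℝ := ∑ ℓ, (-1 : ℝ) ^ (f ℓ : ℕ) / 2

lemma half_smul_sum_Zop :
    (1 / 2 : ℂ) • ∑ ℓ : Fin n, Zop ℓ = diagonal fun f => (zSpin f : ℂ) := by
  ext f g
  by_cases h : f = g
  · subst h
    simp [Zop, Matrix.sum_apply, zSpin, Finset.mul_sum, div_eq_inv_mul]
  · simp [Zop, Matrix.sum_apply, h]

lemma zSpin_sub_eq_of_flip {k : Fin n} {f g : Fin n → Fin 2} (hk : f k ≠ g k)
    (hm : ∀ m, m ≠ k → f m = g m) : zSpin f - zSpin g = (-1) ^ (f k : ℕ) := by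
  rw [zSpin, zSpin, ← Finset.sum_sub_distrib,
    Finset.sum_eq_single k (fun m _ hmk => by rw [hm m hmk, sub_self]) (by simp)]
  obtain ⟨hf, hg⟩ | ⟨hf, hg⟩ : (f k = 0 ∧ g k = 1) ∨ (f k = 1 ∧ g k = 0) := by omega
  all_goals norm_num [hf, hg]

noncomputable def zRotation (θ : ℝ) : Matrix (Fin n → Fin 2) (Fin n → Fin 2) ℂ :=
  diagonal fun f => cexp (-(I * θ) * zSpin f)

lemma exp_smul_half_smul_sum_Zop (θ : ℝ) :
    NormedSpace.exp (-(I * θ) • ((1 / 2 : ℂ) • ∑ ℓ : Fin n, Zop ℓ)) = zRotation θ := by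
  rw [half_smul_sum_Zop, exp_smul_diagonal, zRotation]

lemma zRotation_mem_unitaryGroup (θ : ℝ) :
    zRotation θ ∈ unitaryGroup (Fin n → Fin 2) ℂ := by
  rw [mem_unitaryGroup_iff', zRotation, star_eq_conjTranspose, diagonal_conjTranspose,
    diagonal_mul_diagonal, ← diagonal_one]
  congr 1
  funext f
  rw [Pi.star_apply, star_exp_neg_I_mul_ofReal, ← Complex.exp_add]
  simp

lemma zRotation_mul_mul_star_apply (θ : ℝ) (A : Matrix (Fin n → Fin 2) (Fin n → Fin 2) ℂ)
    (f g : Fin n → Fin 2) :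
    (zRotation θ * A * star (zRotation θ) : Matrix _ _ ℂ) f g =
      cexp (-(I * θ) * ((zSpin f - zSpin g : ℝ) : ℂ)) * A f g := by
  rw [zRotation, star_eq_conjTranspose, diagonal_conjTranspose, mul_diagonal, diagonal_mul,
    Pi.star_apply, star_exp_neg_I_mul_ofReal, mul_right_comm, ← Complex.exp_add]
  congr 2
  push_cast
  ring

lemma zRotation_mul_Xop_mul_star (θ : ℝ) (k : Fin n) :
    zRotation θ * Xop k * star (zRotation θ) =
      (Real.cos θ : ℂ) • Xop k + (Real.sin θ : ℂ) • Yop k := by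
  ext f g
  rw [zRotation_mul_mul_star_apply]
  by_cases h : f k ≠ g k ∧ ∀ m, m ≠ k → f m = g m
  · simp only [Xop, Yop, if_pos h, Matrix.add_apply, Matrix.smul_apply, smul_eq_mul, mul_one,
      zSpin_sub_eq_of_flip h.1 h.2, ofReal_pow, ofReal_neg, ofReal_one, exp_neg_I_mul_neg_one_pow]
  · simp [Xop, Yop, h]

lemma zRotation_mul_Yop_mul_star (θ : ℝ) (k : Fin n) :
    zRotation θ * Yop k * star (zRotation θ) =
      (Real.cos θ : ℂ) • Yop k - (Real.sin θ : ℂ) • Xop k := by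
  ext f g
  rw [zRotation_mul_mul_star_apply]
  by_cases h : f k ≠ g k ∧ ∀ m, m ≠ k → f m = g m
  · simp only [Xop, Yop, if_pos h, Matrix.sub_apply, Matrix.smul_apply, smul_eq_mul, mul_one,
      zSpin_sub_eq_of_flip h.1 h.2, ofReal_pow, ofReal_neg, ofReal_one, exp_neg_I_mul_neg_one_pow]
    have hsq : (I * (-1 : ℂ) ^ ((f k : ℕ) + 1)) ^ 2 = -1 := by simp [mul_pow, ← pow_mul]
    linear_combination (Real.sin θ : ℂ) * hsq
  · simp [Xop, Yop, h]
end ZRotation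

theorem stmt10 (n : ℕ) (J : Fin n → Fin n → ℝ) :
    NormedSpace.exp (-(Complex.I * ((Real.pi / 2 : ℝ) : ℂ)) •
        ((1 / 2 : ℂ) • ∑ ℓ : Fin n, Zop ℓ)) *
      (∑ k : Fin n, ∑ l : Fin n,
        if k < l then ((J k l : ℂ)) • (Xop k * Xop l - Yop k * Yop l) else 0) *
      (NormedSpace.exp (-(Complex.I * ((Real.pi / 2 : ℝ) : ℂ)) •
        ((1 / 2 : ℂ) • ∑ ℓ : Fin n, Zop ℓ)))ᴴ =
    -(∑ k : Fin n, ∑ l : Fin n,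
        if k < l then ((J k l : ℂ)) • (Xop k * Xop l - Yop k * Yop l) else 0) := by
  rw [exp_smul_half_smul_sum_Zop]
  let rot := Unitary.conjStarAlgAut ℂ _ ⟨_, zRotation_mem_unitaryGroup (n := n) (Real.pi / 2)⟩
  have hX (k : Fin n) : rot (Xop k) = Yop k := by
    simp [rot, zRotation_mul_Xop_mul_star]
  have hY (k : Fin n) : rot (Yop k) = -Xop k := by
    simp [rot, zRotation_mul_Yop_mul_star]
  change rot _ = _
  simp only [map_sum, apply_ite rot, map_zero, map_smul, map_sub, map_mul, hX, hY, neg_mul_neg]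
  simp only [← Finset.sum_neg_distrib]
  refine Finset.sum_congr rfl fun k _ => Finset.sum_congr rfl fun l _ => ?_
  split_ifs <;> simp [← smul_neg]
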